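/- arXiv:math/0601653 — 3 statements merged into one kernel-verified Lean document; each statement's English description precedes it below -/
import Mathlib

section
/- Let ρ be a complex number with 0 < Re(ρ) < 1, let h ≥ 1/2 be real, and let s be a complex number with Re(s) > 1/2. Then |1 - (h+s)/ρ| > |1 - (h+1-conj(s))/ρ|. -/
/-! The points `h + s` and `h + 1 - conj s` have the same imaginary part, and the perpendicular
bisector of the segment joining them is the line `Re = h + 1/2 ≥ 1 > Re ρ`; so `ρ` is strictly
closer to the one with smaller real part, which is `h + 1 - conj s` since `Re s > 1/2`. -/

theorem Complex.norm_sub_lt_norm_sub_of_im_eq {ρ w z : ℂ} (him : w.im = z.im)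
    (hwz : w.re < z.re) (hρ : 2 * ρ.re < w.re + z.re) : ‖ρ - w‖ < ‖ρ - z‖ := by
  refine lt_of_pow_lt_pow_left₀ 2 (norm_nonneg _) ?_
  simp only [Complex.sq_norm, Complex.normSq_apply, Complex.sub_re, Complex.sub_im, him]
  -- the difference of the squared distances is `(z.re - w.re) * (w.re + z.re - 2 * ρ.re)`
  nlinarith [mul_pos (sub_pos.2 hwz) (sub_pos.2 hρ)]

open Complex in
theorem stmt_2 (ρ : ℂ) (hρ0 : 0 < ρ.re) (hρ1 : ρ.re < 1)
    (h : ℝ) (hh : 1/2 ≤ h) (s : ℂ) (hs : 1/2 < s.re) :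
    ‖1 - ((h : ℂ) + s) / ρ‖ >
      ‖1 - ((h : ℂ) + 1 - (starRingEnd ℂ) s) / ρ‖ := by
  have hρ : ρ ≠ 0 := fun h0 => by simp [h0] at hρ0
  rw [gt_iff_lt, one_sub_div hρ, one_sub_div hρ, norm_div, norm_div]
  refine div_lt_div_of_pos_right ?_ (norm_pos_iff.2 hρ)
  apply Complex.norm_sub_lt_norm_sub_of_im_eq <;>
    simp only [add_re, add_im, sub_re, sub_im, ofReal_re, ofReal_im, one_re, one_im, conj_re,
      conj_im] <;> linarith
end

section
/- Let E : ℂ → ℂ be an entire function satisfying |E(s)| > |E(1 - conj(s))| for all s with Re(s) > 1/2. Define A(s) = (E(s) + conj(E(1 - conj(s))))/2. Then A has no zeros off the critical line: if A(s) = 0 then Re(s) = 1/2. -/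
open ComplexConjugate

namespace Complex

theorem norm_eq_norm_of_add_conj_eq_zero {z w : ℂ} (h : z + conj w = 0) : ‖z‖ = ‖w‖ := by
  rw [eq_neg_of_add_eq_zero_left h, norm_neg, norm_conj]

theorem one_sub_conj_one_sub_conj (s : ℂ) : 1 - conj (1 - conj s) = s := by
  simp

theorem re_one_sub_conj (s : ℂ) : (1 - conj s).re = 1 - s.re := by
  simp

end Complex

open Complex in
theorem stmt_4_general (E : ℂ → ℂ)
    (hineq : ∀ s : ℂ, 1/2 < s.re →
      ‖E s‖ > ‖E (1 - (starRingEnd ℂ) s)‖)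
    (A : ℂ → ℂ)
    (hA : ∀ s, A s = (E s + (starRingEnd ℂ) (E (1 - (starRingEnd ℂ) s))) / 2) :
    ∀ s : ℂ, A s = 0 → s.re = 1/2 := by
  intro s hs
  have hnorm : ‖E s‖ = ‖E (1 - conj s)‖ :=
    norm_eq_norm_of_add_conj_eq_zero (by simpa [hA] using hs)
  rcases lt_trichotomy s.re (1/2) with hlt | heq | hgt
  · have hrefl := hineq (1 - conj s) (by rw [re_one_sub_conj]; linarith)
    rw [one_sub_conj_one_sub_conj] at hrefl
    linarith
  · exact heq
  · linarith [hineq s hgt]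

theorem stmt_4 (E : ℂ → ℂ) (hE : Differentiable ℂ E)
    (hineq : ∀ s : ℂ, 1/2 < s.re →
      ‖E s‖ > ‖E (1 - (starRingEnd ℂ) s)‖)
    (A : ℂ → ℂ)
    (hA : ∀ s, A s = (E s + (starRingEnd ℂ) (E (1 - (starRingEnd ℂ) s))) / 2) :
    ∀ s : ℂ, A s = 0 → s.re = 1/2 :=
  stmt_4_general E hineq A hA
end

section
/- Let E : ℂ → ℂ be an entire function satisfying |E(s)| > |E(1 - conj(s))| for all s with Re(s) > 1/2, and define A(s) = (E(s) + conj(E(1-conj(s))))/2 and B(s) = -(E(s) - conj(E(1-conj(s))))/(2i). Then for every real t, writing s = 1/2 + it, one has Im( A'(s) · conj(B(s)) - B'(s) · conj(A(s)) ) ≤ 0; equivalently, (i·A'(s))·B(s) - (i·B'(s))·A(s) is a nonnegative real number (using that A and B are real on the critical line). -/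
/-!
Write `d = E'(s)` and `e = E(s)` at a point `s` of the critical line. There the reflected function
`conj (E (1 - conj s))` takes the value `conj e` and has derivative `-conj d`, so `A` and `B` are
real and a direct computation gives `Im (A' conj B - B' conj A) = -Re (d conj e)`, i.e. minus half the
derivative of `σ ↦ |E(s + σ)|²` at `0`. The hypothesis says `|E(s + α)|² > |E(s - α)|²` for `α > 0`, so
the symmetric difference quotients of this function are nonnegative, hence so is its derivative.
-/

open Complex ComplexConjugate

theorem nonneg_of_hasDerivAt_of_forall_le {f : ℝ → ℝ} {f' x : ℝ} (hf : HasDerivAt f f' x)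
    (h : ∀ α > 0, f (x - α) ≤ f (x + α)) : 0 ≤ f' := by
  have hg : HasDerivAt (fun α => f (x + α) - f (x - α)) (f' - -f') 0 := by
    refine (HasDerivAt.comp_const_add x 0 ?_).sub (HasDerivAt.comp_const_sub x 0 ?_) <;>
      simpa using hf
  have hslope := (hasDerivAt_iff_tendsto_slope.mp hg).mono_left
    (nhdsWithin_mono 0 fun α (hα : α ∈ Set.Ioi 0) => ne_of_gt hα)
  have : 0 ≤ f' - -f' := ge_of_tendsto hslope <| by
    filter_upwards [self_mem_nhdsWithin] with α (hα : 0 < α)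
    rw [slope_def_field]
    simpa using div_nonneg (sub_nonneg.2 (h α hα)) hα.le
  linarith

theorem hasDerivAt_conj_comp_one_sub_conj {E : ℂ → ℂ} {s : ℂ}
    (hE : DifferentiableAt ℂ E (1 - conj s)) :
    HasDerivAt (fun z => conj (E (1 - conj z))) (-conj (deriv E (1 - conj s))) s := by
  have := (hE.hasDerivAt.comp_const_sub 1 (conj s)).conj_conj
  simpa [Function.comp_def] using this

theorem hasDerivAt_norm_sq_comp_add_ofReal {E : ℂ → ℂ} {s : ℂ} (hE : DifferentiableAt ℂ E s) :
    HasDerivAt (fun σ : ℝ => ‖E (s + σ)‖ ^ 2) (2 * (deriv E s * conj (E s)).re) 0 := by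
  have h : HasDerivAt (fun σ : ℝ => E (s + σ)) (deriv E s) 0 :=
    HasDerivAt.comp_ofReal (e := fun z => E (s + z))
      (by simpa using HasDerivAt.comp_const_add s 0 (by rw [add_zero]; exact hE.hasDerivAt))
  simpa [Complex.inner] using h.norm_sq

theorem re_deriv_mul_conj_nonneg_of_norm_lt {E : ℂ → ℂ} {s : ℂ} (hE : DifferentiableAt ℂ E s)
    (hs : s.re = 1 / 2) (hineq : ∀ z : ℂ, 1 / 2 < z.re → ‖E (1 - conj z)‖ < ‖E z‖) :
    0 ≤ (deriv E s * conj (E s)).re := by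
  have h := nonneg_of_hasDerivAt_of_forall_le (hasDerivAt_norm_sq_comp_add_ofReal hE) fun α hα => by
    have hreflect : 1 - conj (s + α) = s + ↑(0 - α) := by
      apply Complex.ext <;> simp [hs]; ring
    have := hineq (s + α) (by simp [hs, hα])
    rw [hreflect] at this
    simpa using pow_le_pow_left₀ (norm_nonneg _) this.le 2
  linarith

theorem im_mul_conj_sub_mul_conj (d e : ℂ) :
    ((d + -conj d) / 2 * conj (-(e - conj e) / (2 * I))
      - -(d - -conj d) / (2 * I) * conj ((e + conj e) / 2)).im = -(d * conj e).re := by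
  simp only [map_div₀, map_sub, map_add, map_neg, map_mul, conj_conj, conj_I, sub_im, add_im, neg_im,
    mul_im, mul_re, div_im, div_re, normSq_apply, conj_re, conj_im, sub_re, add_re, neg_re, I_re, I_im]
  norm_num
  ring

theorem stmt_6 (E : ℂ → ℂ) (hE : Differentiable ℂ E)
    (hineq : ∀ s : ℂ, 1/2 < s.re →
      ‖E s‖ > ‖E (1 - (starRingEnd ℂ) s)‖)
    (A B : ℂ → ℂ)
    (hA : ∀ s, A s = (E s + (starRingEnd ℂ) (E (1 - (starRingEnd ℂ) s))) / 2)
    (hB : ∀ s, B s = -(E s - (starRingEnd ℂ) (E (1 - (starRingEnd ℂ) s))) / (2 * Complex.I)) :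
    ∀ t : ℝ,
      (deriv A (1/2 + t * Complex.I) * (starRingEnd ℂ) (B (1/2 + t * Complex.I))
        - deriv B (1/2 + t * Complex.I) * (starRingEnd ℂ) (A (1/2 + t * Complex.I))).im ≤ 0 := by
  intro t
  set s := 1 / 2 + t * I
  have hs : s.re = 1 / 2 := by simp [s]
  have hreflect : 1 - conj s = s := by apply Complex.ext <;> simp [s]; norm_num
  have hreflectDeriv := hasDerivAt_conj_comp_one_sub_conj (hE (1 - conj s))
  rw [hreflect] at hreflectDeriv
  have hA' : HasDerivAt A ((deriv E s + -conj (deriv E s)) / 2) s := by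
    rw [funext hA]; exact ((hE s).hasDerivAt.add hreflectDeriv).div_const 2
  have hB' : HasDerivAt B (-(deriv E s - -conj (deriv E s)) / (2 * I)) s := by
    rw [funext hB]; exact ((hE s).hasDerivAt.sub hreflectDeriv).neg.div_const (2 * I)
  rw [hA'.deriv, hB'.deriv, hA, hB, hreflect, im_mul_conj_sub_mul_conj, neg_nonpos]
  exact re_deriv_mul_conj_nonneg_of_norm_lt (hE s) hs hineq
end
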